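/- If Y is a Poisson random variable with mean λ, then the generalized Stirling numbers S_Y(n,m) = (1/m!) ∑_{k=0}^{m} C(m,k)(-1)^{m-k} B_n(kλ) satisfy S_Y(n,m) = ∑_{r=m}^{n} S(n,r) S(r,m) λ^r for m ≤ n, where B_n is the Bell polynomial. -/
import Mathlib


open Finset

/-- The Stirling number of the second kind, defined by
`S(n,m) = (1/m!) ∑_{k=0}^{m} C(m,k) (-1)^{m-k} k^n`. -/
noncomputable def stirling2 (n m : ℕ) : ℝ :=
  ((m.factorial : ℝ))⁻¹ * ∑ k ∈ range (m + 1), (m.choose k : ℝ) * (-1) ^ (m - k) * (k : ℝ) ^ n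

/-- The Bell (Touchard) polynomial `B_n(x) = ∑_{j=0}^{n} S(n,j) x^j`. -/
noncomputable def bellPoly (n : ℕ) (x : ℝ) : ℝ := ∑ j ∈ range (n + 1), stirling2 n j * x ^ j

open fwdDiff in
lemma fwdDiff_iter_pow_eq_zero : ∀ j m : ℕ, j < m →
    (fwdDiff (1:ℕ))^[m] (fun x : ℕ ↦ (x : ℝ) ^ j) = 0 := by
  intro j
  induction j using Nat.strong_induction_on with
  | _ j IH =>
    intro m hm
    obtain ⟨m, rfl⟩ : ∃ m', m = m' + 1 := ⟨m - 1, by omega⟩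
    rw [Function.iterate_succ_apply]
    have hΔ : (fwdDiff (1:ℕ)) (fun x : ℕ ↦ (x : ℝ) ^ j)
        = ∑ i ∈ range j, (j.choose i : ℝ) • (fun x : ℕ ↦ (x : ℝ) ^ i) := by
      ext x
      have hb : ((x : ℝ) + 1) ^ j = ∑ i ∈ range (j + 1), (x : ℝ) ^ i * 1 ^ (j - i) * j.choose i :=
        add_pow _ _ _
      simp only [fwdDiff, Finset.sum_apply, Pi.smul_apply, smul_eq_mul]
      push_cast
      rw [hb, Finset.sum_range_succ]
      simp [mul_comm]
    rw [hΔ, fwdDiff_iter_finset_sum]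
    funext x
    rw [Finset.sum_apply]
    apply Finset.sum_eq_zero
    intro i hi
    have hij : i < j := Finset.mem_range.mp hi
    rw [fwdDiff_iter_const_smul, IH i hij m (by omega)]
    simp

open fwdDiff in
lemma stirling2_eq_fwdDiff (j m : ℕ) :
    stirling2 j m = (m.factorial : ℝ)⁻¹ * (fwdDiff (1:ℕ))^[m] (fun x : ℕ ↦ (x : ℝ) ^ j) 0 := by
  rw [stirling2, fwdDiff_iter_eq_sum_shift]
  congr 1
  apply Finset.sum_congr rfl
  intro k _
  simp only [smul_eq_mul, zsmul_eq_mul, zero_add]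
  push_cast
  ring

lemma stirling2_eq_zero {j m : ℕ} (h : j < m) : stirling2 j m = 0 := by
  rw [stirling2_eq_fwdDiff, fwdDiff_iter_pow_eq_zero j m h]
  simp

/-- For `Y` Poisson with mean `λ`, the generalized Stirling numbers
`S_Y(n,m) = (1/m!) ∑_{k=0}^{m} C(m,k) (-1)^{m-k} B_n(kλ)` satisfy
`S_Y(n,m) = ∑_{r=m}^{n} S(n,r) S(r,m) λ^r` for `m ≤ n`, for all real `λ`. -/
theorem generalized_stirling_poisson (n m : ℕ) (h : m ≤ n) (lam : ℝ) :
    ((m.factorial : ℝ))⁻¹ *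
      ∑ k ∈ range (m + 1), (m.choose k : ℝ) * (-1) ^ (m - k) * bellPoly n (k * lam) =
      ∑ r ∈ Icc m n, stirling2 n r * stirling2 r m * lam ^ r := by
  have key : ∀ k : ℕ, (m.choose k : ℝ) * (-1) ^ (m - k) * bellPoly n (k * lam)
      = ∑ j ∈ range (n + 1),
          stirling2 n j * lam ^ j * ((m.choose k : ℝ) * (-1) ^ (m - k) * (k : ℝ) ^ j) := by
    intro k
    rw [bellPoly, Finset.mul_sum]
    apply Finset.sum_congr rfl
    intro j _
    rw [mul_pow]
    ring
  calc ((m.factorial : ℝ))⁻¹ *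
      ∑ k ∈ range (m + 1), (m.choose k : ℝ) * (-1) ^ (m - k) * bellPoly n (k * lam)
      = ∑ j ∈ range (n + 1), stirling2 n j * stirling2 j m * lam ^ j := by
        simp_rw [key]
        rw [Finset.sum_comm, Finset.mul_sum]
        apply Finset.sum_congr rfl
        intro j _
        set S := stirling2 n j with hS
        rw [stirling2, ← Finset.mul_sum]
        ring
    _ = ∑ r ∈ Icc m n, stirling2 n r * stirling2 r m * lam ^ r := by
        refine (Finset.sum_subset ?_ ?_).symm
        · intro r hr
          rw [Finset.mem_Icc] at hr
          exact Finset.mem_range.mpr (by omega)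
        · intro j hj hj'
          rw [Finset.mem_range] at hj
          rw [Finset.mem_Icc] at hj'
          have : j < m := by omega
          rw [stirling2_eq_zero this]
          ring
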